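/- arXiv:2508.10871 — 5 statements merged into one kernel-verified Lean document; each statement's English description precedes it below -/
import Mathlib

section
/- For all N ≥ 1, d_N(x) = d_{N-1}(x) + x^{1+χ₂(N)} q^N d_{N-3-χ₃(N)}(x), where χ₂(N) = 1 if 2 divides N and 0 otherwise, and χ₃(N) = 1 if 3 divides N and 0 otherwise. -/
open Polynomial

noncomputable section

abbrev R2 : Type := Polynomial (Polynomial ℤ)
def xx : R2 := Polynomial.X
def qq : R2 := Polynomial.C Polynomial.X
def chi2 (n : ℕ) : ℕ := if 2 ∣ n then 1 else 0
def chi3 (n : ℕ) : ℕ := if 3 ∣ n then 1 else 0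

/-- The Schur partitions (as finsets of distinct parts) with all parts `≤ N`:
parts are positive, any two parts differ by at least 3, and no two
consecutive multiples of 3 occur. -/
def schurSets (N : ℕ) : Finset (Finset ℕ) :=
  (Finset.range (N + 1)).powerset.filter fun S =>
    (∀ a ∈ S, 1 ≤ a) ∧
    (∀ a ∈ S, ∀ b ∈ S, a < b → 3 ≤ b - a) ∧
    (∀ a ∈ S, ∀ b ∈ S, a < b → 3 ∣ a → b - a ≠ 3)

/-- `d_N(x) = Σ_{m,n} D_N(m,n) x^m q^n`, where `D_N(m,n)` counts Schur partitions of `n`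
with parts `≤ N` such that (number of parts) + (number of even parts) `= m`. -/
def dComb (N : ℕ) : R2 :=
  ∑ S ∈ schurSets N,
    xx ^ (S.card + (S.filter (fun a => Even a)).card) * qq ^ (∑ a ∈ S, a)

lemma mem_schurSets {N : ℕ} {S : Finset ℕ} :
    S ∈ schurSets N ↔ (∀ a ∈ S, a ≤ N) ∧
      (∀ a ∈ S, 1 ≤ a) ∧
      (∀ a ∈ S, ∀ b ∈ S, a < b → 3 ≤ b - a) ∧
      (∀ a ∈ S, ∀ b ∈ S, a < b → 3 ∣ a → b - a ≠ 3) := by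
  simp [schurSets, Finset.mem_filter, Finset.mem_powerset, Finset.subset_iff,
    Nat.lt_succ_iff, and_assoc]

theorem stmt0 (N : ℕ) (hN : 1 ≤ N) :
    dComb N = dComb (N - 1) + xx ^ (1 + chi2 N) * qq ^ N * dComb (N - 3 - chi3 N) := by
  set M := N - 3 - chi3 N with hM
  have hMle : M ≤ N - 3 := Nat.sub_le _ _
  have hnotmem : ∀ T ∈ schurSets M, N ∉ T := by
    intro T hT hNT
    have := (mem_schurSets.mp hT).1 N hNT
    omega
  have key1 : (schurSets N).filter (fun S => ¬ N ∈ S) = schurSets (N - 1) := by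
    ext S
    simp only [Finset.mem_filter, mem_schurSets]
    constructor
    · rintro ⟨⟨h1, h2, h3, h4⟩, hN'⟩
      refine ⟨fun a ha => ?_, h2, h3, h4⟩
      have := h1 a ha
      rcases eq_or_ne a N with rfl | h
      · exact absurd ha hN'
      · omega
    · rintro ⟨h1, h2, h3, h4⟩
      refine ⟨⟨fun a ha => le_trans (h1 a ha) (Nat.sub_le _ _), h2, h3, h4⟩,
        fun hmem => ?_⟩
      have := h1 N hmem; omega
  have key2 : (schurSets N).filter (fun S => N ∈ S) = (schurSets M).image (insert N) := by
    ext S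
    simp only [Finset.mem_filter, Finset.mem_image]
    constructor
    · rintro ⟨hS, hNS⟩
      obtain ⟨h1, h2, h3, h4⟩ := mem_schurSets.mp hS
      refine ⟨S.erase N, ?_, Finset.insert_erase hNS⟩
      rw [mem_schurSets]
      refine ⟨?_, fun a ha => h2 a (Finset.mem_of_mem_erase ha),
        fun a ha b hb hab => h3 a (Finset.mem_of_mem_erase ha) b (Finset.mem_of_mem_erase hb) hab,
        fun a ha b hb hab h3a => h4 a (Finset.mem_of_mem_erase ha) b (Finset.mem_of_mem_erase hb) hab h3a⟩
      intro a ha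
      have haS := Finset.mem_of_mem_erase ha
      have haN : a ≠ N := Finset.ne_of_mem_erase ha
      have h1a := h1 a haS
      have halt : a < N := lt_of_le_of_ne h1a haN
      have h3a := h3 a haS N hNS halt
      have hnd : ¬ (3 ∣ a ∧ N - a = 3) := by
        rintro ⟨hd, hc⟩
        exact h4 a haS N hNS halt hd hc
      rw [hM]
      by_cases h3N : 3 ∣ N <;> simp only [chi3, h3N, if_pos, if_neg, if_true, if_false] <;> omega
    · rintro ⟨T, hT, rfl⟩
      obtain ⟨h1, h2, h3, h4⟩ := mem_schurSets.mp hT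
      have hTN : ∀ a ∈ T, a + 3 + chi3 N ≤ N := by
        intro a ha
        have hu := h1 a ha
        have := h2 a ha
        rw [hM] at hu
        by_cases h3N : 3 ∣ N <;>
          simp only [chi3, h3N, if_pos, if_neg, if_true, if_false] at hu ⊢ <;> omega
      refine ⟨mem_schurSets.mpr ⟨?_, ?_, ?_, ?_⟩, Finset.mem_insert_self _ _⟩
      · intro a ha
        rcases Finset.mem_insert.mp ha with rfl | ha'
        · exact le_rfl
        · have := hTN a ha'; omega
      · intro a ha
        rcases Finset.mem_insert.mp ha with rfl | ha'
        · exact hN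
        · exact h2 a ha'
      · intro a ha b hb hab
        rcases Finset.mem_insert.mp ha with rfl | ha' <;>
          rcases Finset.mem_insert.mp hb with rfl | hb'
        · omega
        · have := hTN b hb'; omega
        · have := hTN a ha'; omega
        · exact h3 a ha' b hb' hab
      · intro a ha b hb hab h3a
        rcases Finset.mem_insert.mp ha with rfl | ha' <;>
          rcases Finset.mem_insert.mp hb with rfl | hb'
        · omega
        · have := hTN b hb'; omega
        · -- a ∈ T, b = N
          have haT := hTN a ha'
          intro hc
          simp only [chi3] at haT
          split at haT <;> omega
        · exact h4 a ha' b hb' hab h3a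
  have hinj : ∀ a ∈ schurSets M, ∀ b ∈ schurSets M, insert N a = insert N b → a = b := by
    intro a ha b hb h
    have := Finset.erase_insert (hnotmem a ha)
    have := Finset.erase_insert (hnotmem b hb)
    calc a = (insert N a).erase N := (Finset.erase_insert (hnotmem a ha)).symm
      _ = (insert N b).erase N := by rw [h]
      _ = b := Finset.erase_insert (hnotmem b hb)
  have hterm : ∀ T ∈ schurSets M,
      xx ^ ((insert N T).card + ((insert N T).filter (fun a => Even a)).card) *
        qq ^ (∑ a ∈ insert N T, a)
      = xx ^ (1 + chi2 N) * qq ^ N *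
        (xx ^ (T.card + (T.filter (fun a => Even a)).card) * qq ^ (∑ a ∈ T, a)) := by
    intro T hT
    have hnT := hnotmem T hT
    rw [Finset.card_insert_of_notMem hnT, Finset.sum_insert hnT, Finset.filter_insert]
    by_cases hE : Even N
    · have h2 : 2 ∣ N := hE.two_dvd
      rw [if_pos hE,
        Finset.card_insert_of_notMem (by intro h; exact hnT (Finset.mem_filter.mp h).1)]
      simp only [chi2, h2, if_pos, if_true, pow_add, pow_succ]
      ring
    · have h2 : ¬ 2 ∣ N := by
        intro h; exact hE ⟨N / 2, by omega⟩
      rw [if_neg hE]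
      simp only [chi2, h2, if_neg, if_false, pow_add, pow_succ]
      ring
  have split := Finset.sum_filter_add_sum_filter_not (schurSets N) (fun S => N ∈ S)
    (fun S => xx ^ (S.card + (S.filter (fun a => Even a)).card) * qq ^ (∑ a ∈ S, a))
  rw [dComb, ← split, key1, key2, Finset.sum_image hinj, Finset.sum_congr rfl hterm,
    ← Finset.mul_sum]
  rw [add_comm]
  rfl

end
end

section
/- For 2N−1 ≥ 5 with 2N−1 not divisible by 3, 𝒹_{2N−1}(x) = 𝒹_{2N−2}(x) + x q^{2N−1} 𝒹_{2N−4}(x). -/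
open Polynomial

noncomputable section AlladiSchur

/-- Indicator of oddness. -/
def chiO (n : ℕ) : ℕ := if Odd n then 1 else 0

/-- The Alladi–Schur polynomials `d_N(x)`, defined by the recurrence
`d_N = d_{N-1} + x^{1+χ₂(N)} q^N d_{N-3-χ₃(N)}` for `N ≥ 3`. -/
def dAS : ℕ → R2
  | 0 => 1
  | 1 => 1 + xx * qq
  | 2 => 1 + xx ^ 2 * qq ^ 2
  | (n + 3) => dAS (n + 2) + xx ^ (1 + chi2 (n + 3)) * qq ^ (n + 3) * dAS (n - chi3 (n + 3))

/-- `p_n(x) = ∏_{i=1}^n (1 + x q^{2i-1} + x² q^{4i-2})`. -/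
def pA (n : ℕ) : R2 := ∏ i ∈ Finset.range n, (1 + xx * qq ^ (2 * i + 1) + xx ^ 2 * qq ^ (4 * i + 2))

/-- The index `⌈(N+3χ_o(N))/6⌉ - χ_o(N)` in Andrews' factorization theorem. -/
def idx (N : ℕ) : ℕ := (N + 3 * chiO N + 5) / 6 - chiO N

/-- Substitution `x ↦ x q²` in a polynomial of `R2`. -/
def subq2 (f : R2) : R2 := f.eval₂ Polynomial.C (Polynomial.C (Polynomial.X ^ 2) * Polynomial.X)

/-- `λ_k(x) = 1 + x q^{2k-1} + x² q^{4k-2}`. -/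
def lam (k : ℕ) : R2 := 1 + xx * qq ^ (2 * k - 1) + xx ^ 2 * qq ^ (4 * k - 2)


lemma pA_ne_zero (n : ℕ) : pA n ≠ 0 := by
  intro h
  have := congrArg (Polynomial.eval (0 : Polynomial ℤ)) h
  simp [pA, xx, qq, Polynomial.eval_prod] at this

/-- For `2N-1 ≥ 5` with `2N-1` not divisible by 3,
`𝒹_{2N-1}(x) = 𝒹_{2N-2}(x) + x q^{2N-1} 𝒹_{2N-4}(x)`. -/
theorem stmt4 (N : ℕ) (h5 : 5 ≤ 2 * N - 1) (h3 : ¬ (3 ∣ (2 * N - 1))) (f g h : R2)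
    (hf : dAS (2 * N - 1) = pA (idx (2 * N - 1)) * f)
    (hg : dAS (2 * N - 2) = pA (idx (2 * N - 2)) * g)
    (hh : dAS (2 * N - 4) = pA (idx (2 * N - 4)) * h) :
    f = g + xx * qq ^ (2 * N - 1) * h := by
  obtain ⟨m, rfl⟩ : ∃ m, N = m + 3 := ⟨N - 3, by omega⟩
  have e1 : 2 * (m + 3) - 1 = 2 * m + 5 := by omega
  have e2 : 2 * (m + 3) - 2 = 2 * m + 4 := by omega
  have e3 : 2 * (m + 3) - 4 = 2 * m + 2 := by omega
  rw [e1] at hf h3 ⊢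
  rw [e2] at hg
  rw [e3] at hh
  have hchi2 : chi2 (2 * m + 5) = 0 := by
    have h2 : ¬ (2 ∣ 2 * m + 5) := by omega
    simp only [chi2, if_neg h2]
  have hchi3 : chi3 (2 * m + 5) = 0 := by
    simp only [chi3, if_neg h3]
  have hO1 : chiO (2 * m + 5) = 1 := by
    have : Odd (2 * m + 5) := by rw [Nat.odd_iff]; omega
    simp only [chiO, if_pos this]
  have hO2 : chiO (2 * m + 4) = 0 := by
    have : ¬ Odd (2 * m + 4) := by rw [Nat.odd_iff]; omega
    simp only [chiO, if_neg this]
  have hO3 : chiO (2 * m + 2) = 0 := by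
    have : ¬ Odd (2 * m + 2) := by rw [Nat.odd_iff]; omega
    simp only [chiO, if_neg this]
  obtain ⟨t, ht⟩ : ∃ t, m = 3 * t ∨ m = 3 * t + 1 := ⟨m / 3, by omega⟩
  have hidx2 : idx (2 * m + 4) = idx (2 * m + 5) := by
    simp only [idx, hO1, hO2]
    rcases ht with rfl | rfl <;> omega
  have hidx3 : idx (2 * m + 2) = idx (2 * m + 5) := by
    simp only [idx, hO1, hO3]
    rcases ht with rfl | rfl <;> omega
  have hrec : dAS (2 * m + 5) =
      dAS (2 * m + 4) + xx ^ (1 + chi2 (2 * m + 5)) * qq ^ (2 * m + 5)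
        * dAS (2 * m + 2 - chi3 (2 * m + 5)) := by
    show dAS ((2 * m + 2) + 3) = _
    rw [dAS]
  rw [hchi2, hchi3, pow_one] at hrec
  simp only [Nat.sub_zero] at hrec
  rw [hf, hg, hh, hidx2, hidx3] at hrec
  set k := idx (2 * m + 5)
  have : pA k * f = pA k * (g + xx * qq ^ (2 * m + 5) * h) := by
    rw [hrec]; ring
  exact mul_left_cancel₀ (pA_ne_zero k) this

end AlladiSchur
end

section
/- For all N ≥ 0, 𝒹_{6N+3}(x) = (1 + x q^{2N+1} + x² q^{4N+2}) 𝒹_{6N+2}(x) + x q^{6N+3} 𝒹_{6N−1}(x), with the convention 𝒹_{−1}(x) = 1. -/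
open Polynomial

noncomputable section AlladiSchur

lemma factor_ne_zero (a b : ℕ) :
    (1 + xx * qq ^ a + xx ^ 2 * qq ^ b : R2) ≠ 0 := by
  intro h
  have := congrArg (Polynomial.eval 0) h
  simp [xx, qq] at this

lemma idx1 (N : ℕ) : idx (6 * N + 3) = N := by
  have : Odd (6 * N + 3) := ⟨3 * N + 1, by ring⟩
  simp only [idx, chiO, if_pos this]
  omega

lemma idx2 (N : ℕ) : idx (6 * N + 2) = N + 1 := by
  have : ¬ Odd (6 * N + 2) := by simp [Nat.odd_iff]; omega
  simp only [idx, chiO, if_neg this]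
  omega

lemma idx3 (N : ℕ) : idx (6 * N - 1) = N := by
  rcases N with _ | M
  · simp [idx, chiO]
  · have h1 : 6 * (M + 1) - 1 = 6 * M + 5 := by omega
    have : Odd (6 * M + 5) := ⟨3 * M + 2, by ring⟩
    rw [h1]
    simp only [idx, chiO, if_pos this]
    omega

lemma drec (N : ℕ) :
    dAS (6 * N + 3) = dAS (6 * N + 2) + xx * qq ^ (6 * N + 3) * dAS (6 * N - 1) := by
  have h2 : chi2 (6 * N + 3) = 0 := by simp only [chi2]; rw [if_neg]; omega
  have h3 : chi3 (6 * N + 3) = 1 := by simp only [chi3]; rw [if_pos]; omega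
  show dAS (6 * N + 3) = _
  rw [show 6 * N + 3 = (6 * N) + 3 from rfl, dAS, h2, h3]
  norm_num

/-- For all `N ≥ 0`,
`𝒹_{6N+3}(x) = (1 + x q^{2N+1} + x² q^{4N+2}) 𝒹_{6N+2}(x) + x q^{6N+3} 𝒹_{6N-1}(x)`
(for `N = 0` the index `6N-1` truncates to `0` and `𝒹_0 = 1`, matching the
convention `𝒹_{-1} = 1`). -/
theorem stmt5 (N : ℕ) (f g h : R2)
    (hf : dAS (6 * N + 3) = pA (idx (6 * N + 3)) * f)
    (hg : dAS (6 * N + 2) = pA (idx (6 * N + 2)) * g)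
    (hh : dAS (6 * N - 1) = pA (idx (6 * N - 1)) * h) :
    f = (1 + xx * qq ^ (2 * N + 1) + xx ^ 2 * qq ^ (4 * N + 2)) * g
        + xx * qq ^ (6 * N + 3) * h := by
  have key := drec N
  rw [hf, hg, hh, idx1, idx2, idx3] at key
  have psucc : pA (N + 1) = pA N * (1 + xx * qq ^ (2 * N + 1) + xx ^ 2 * qq ^ (4 * N + 2)) :=
    Finset.prod_range_succ _ _
  rw [psucc] at key
  apply mul_left_cancel₀ (pA_ne_zero N)
  rw [key]; ring

end AlladiSchur
end

section
/- For N ≥ 1 with N not divisible by 3, λ_{⌈2N/6⌉}(x) · 𝒹_{2N}(x) = 𝒹_{2N−1}(x) + x² q^{2N} 𝒹_{2N−3}(x), where λ_k(x) = 1 + x q^{2k−1} + x² q^{4k−2}. -/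
open Polynomial

noncomputable section AlladiSchur

-- Auxiliary lemmas

def phi0 : R2 →+* ℤ := (Polynomial.evalRingHom 0).comp (Polynomial.evalRingHom (0 : Polynomial ℤ))

lemma phi0_pA (n : ℕ) : phi0 (pA n) = 1 := by
  unfold pA
  rw [map_prod]
  apply Finset.prod_eq_one
  intro i _
  simp only [phi0, RingHom.coe_comp, Function.comp_apply, coe_evalRingHom, xx, qq]
  simp only [eval_add, eval_one, eval_mul, eval_pow, eval_X, eval_C]
  rw [eval_zero, zero_pow (by omega : 2 * i + 1 ≠ 0), zero_pow (by omega : 4 * i + 2 ≠ 0)]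
  ring

lemma pA_succ (n : ℕ) : pA (n + 1) = pA n * (1 + xx * qq ^ (2 * n + 1) + xx ^ 2 * qq ^ (4 * n + 2)) :=
  Finset.prod_range_succ _ n

lemma lam_succ (m : ℕ) : lam (m + 1) = 1 + xx * qq ^ (2 * m + 1) + xx ^ 2 * qq ^ (4 * m + 2) := by
  unfold lam
  rw [show 2 * (m + 1) - 1 = 2 * m + 1 by omega, show 4 * (m + 1) - 2 = 4 * m + 2 by omega]

/-- For `N ≥ 1` with `3 ∤ N`,
`λ_{⌈2N/6⌉}(x) · 𝒹_{2N}(x) = 𝒹_{2N-1}(x) + x² q^{2N} 𝒹_{2N-3}(x)`. -/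
theorem stmt8 (N : ℕ) (hN : 1 ≤ N) (h3 : ¬ (3 ∣ N)) (f g h : R2)
    (hf : dAS (2 * N) = pA (idx (2 * N)) * f)
    (hg : dAS (2 * N - 1) = pA (idx (2 * N - 1)) * g)
    (hh : dAS (2 * N - 3) = pA (idx (2 * N - 3)) * h) :
    lam ((2 * N + 5) / 6) * f = g + xx ^ 2 * qq ^ (2 * N) * h := by
  rcases eq_or_lt_of_le hN with h1 | h2
  · -- N = 1 : hypotheses contradictory
    subst h1
    exfalso
    have hidx : idx (2 * 1) = 1 := by decide
    rw [hidx] at hf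
    have hd2 : dAS (2 * 1) = 1 + xx ^ 2 * qq ^ 2 := by norm_num [dAS]
    have hp1 : pA 1 = 1 + xx * qq ^ 1 + xx ^ 2 * qq ^ 2 := by
      have h0 : pA 0 = 1 := by simp [pA]
      have := pA_succ 0
      rw [h0, one_mul] at this
      simpa using this
    set ψ : R2 →+* ℤ := (Polynomial.evalRingHom 1).comp (Polynomial.evalRingHom (1 : Polynomial ℤ)) with hψ
    have := congrArg ψ hf
    rw [hd2, hp1, map_mul] at this
    simp [hψ, xx, qq] at this
    omega
  · -- N ≥ 2
    have hN2 : 2 ≤ N := h2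
    set k := (2 * N + 5) / 6 with hk
    have hk1 : 1 ≤ k := by omega
    have hiE : idx (2 * N) = k := by
      have : chiO (2 * N) = 0 := by simp [chiO, Nat.even_iff, parity_simps]
      simp [idx, this, hk]
    have hiO1 : idx (2 * N - 1) = k - 1 := by
      have ho : Odd (2 * N - 1) := by
        refine ⟨N - 1, by omega⟩
      have : chiO (2 * N - 1) = 1 := by simp [chiO, ho]
      simp only [idx, this]
      omega
    have hiO3 : idx (2 * N - 3) = k - 1 := by
      have ho : Odd (2 * N - 3) := ⟨N - 2, by omega⟩
      have : chiO (2 * N - 3) = 1 := by simp [chiO, ho]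
      simp only [idx, this]
      omega
    -- recurrence
    have hrec : dAS (2 * N) = dAS (2 * N - 1) + xx ^ 2 * qq ^ (2 * N) * dAS (2 * N - 3) := by
      obtain ⟨m, hm⟩ : ∃ m, 2 * N = m + 3 := ⟨2 * N - 3, by omega⟩
      have hc2 : chi2 (m + 3) = 1 := by
        simp [chi2, show 2 ∣ m + 3 from hm ▸ ⟨N, rfl⟩]
      have hc3 : chi3 (m + 3) = 0 := by
        have : ¬ (3 ∣ m + 3) := by
          rw [← hm]
          intro hd
          exact h3 ((Nat.Coprime.dvd_of_dvd_mul_left (by norm_num) hd))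
        simp [chi3, this]
      rw [hm]
      show dAS (m + 3) = _
      rw [dAS, hc2, hc3]
      norm_num
    -- combine
    rw [hf, hg, hh, hiE, hiO1, hiO3] at hrec
    obtain ⟨j, hj⟩ : ∃ j, k = j + 1 := ⟨k - 1, by omega⟩
    rw [hj, pA_succ, show j + 1 - 1 = j from rfl] at hrec
    have key : pA j * ((1 + xx * qq ^ (2 * j + 1) + xx ^ 2 * qq ^ (4 * j + 2)) * f)
        = pA j * (g + xx ^ 2 * qq ^ (2 * N) * h) := by
      rw [← mul_assoc, hrec]; ring
    have := mul_left_cancel₀ (pA_ne_zero j) key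
    rw [hj, lam_succ]
    exact this


end AlladiSchur
end

section
/- For all N ≥ 1, 𝒹_{6N}(x) = 𝒹_{6N−1}(x) + x² q^{6N} 𝒹_{6N−4}(x). -/
open Polynomial

noncomputable section AlladiSchur

/-- For all `N ≥ 1`, `𝒹_{6N}(x) = 𝒹_{6N-1}(x) + x² q^{6N} 𝒹_{6N-4}(x)`. -/
theorem stmt9 (N : ℕ) (hN : 1 ≤ N) (f g h : R2)
    (hf : dAS (6 * N) = pA (idx (6 * N)) * f)
    (hg : dAS (6 * N - 1) = pA (idx (6 * N - 1)) * g)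
    (hh : dAS (6 * N - 4) = pA (idx (6 * N - 4)) * h) :
    f = g + xx ^ 2 * qq ^ (6 * N) * h := by
  obtain ⟨M, rfl⟩ : ∃ M, N = M + 1 := ⟨N - 1, by omega⟩
  have e6 : 6 * (M + 1) = 6 * M + 3 + 3 := by ring
  have e5 : 6 * (M + 1) - 1 = 6 * M + 5 := by omega
  have e2 : 6 * (M + 1) - 4 = 6 * M + 2 := by omega
  rw [e6] at hf
  rw [e5] at hg
  rw [e2] at hh
  have hc2 : chi2 (6 * M + 3 + 3) = 1 := by simp [chi2]; omega
  have hc3 : chi3 (6 * M + 3 + 3) = 1 := by simp [chi3]; omega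
  have hd : dAS (6 * M + 3 + 3) = dAS (6 * M + 5) + xx ^ 2 * qq ^ (6 * M + 3 + 3) * dAS (6 * M + 2) := by
    rw [dAS, hc2, hc3]
    norm_num
  have i1 : idx (6 * M + 3 + 3) = M + 1 := by
    have : chiO (6 * M + 3 + 3) = 0 := by simp [chiO, Nat.odd_iff]; omega
    simp [idx, this]; omega
  have i2 : idx (6 * M + 5) = M + 1 := by
    have : chiO (6 * M + 5) = 1 := by simp [chiO, Nat.odd_iff]; omega
    simp [idx, this]; omega
  have i3 : idx (6 * M + 2) = M + 1 := by
    have : chiO (6 * M + 2) = 0 := by simp [chiO, Nat.odd_iff]; omega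
    simp [idx, this]; omega
  rw [i1] at hf; rw [i2] at hg; rw [i3] at hh
  have key : pA (M + 1) * f = pA (M + 1) * (g + xx ^ 2 * qq ^ (6 * (M + 1)) * h) := by
    rw [← hf, hd, hg, hh]
    rw [show 6 * M + 3 + 3 = 6 * (M + 1) by ring]
    ring
  exact mul_left_cancel₀ (pA_ne_zero _) key

end AlladiSchur
end
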